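/- arXiv:1808.04965 — 3 statements merged into one kernel-verified Lean document; each statement's English description precedes it below -/
import Mathlib

section
/- Let L : F^n → F^m be a linear map and 〈L〉 its span (dimension 1 family). Suppose rank(L) ≥ log_{|F|} δ^{-1} + 5. Then for every S ⊆ F^n of density at least δ and every y ∈ F^n, at least half of the pairs (s, s') ∈ S × S satisfy (〈L〉(s) + 〈L〉(y)) ∩ (〈L〉(s') + 〈L〉(y)) = 〈L〉(y), where 〈L〉(x) denotes the span of L(x). -/
/-!
A pair `(s, s')` can only fail when `L s' ∈ span {L s, L y}`, which for fixed `s` confines `s'`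
to the preimage under `L` of a space of dimension at most `2`, a set of size at most
`q ^ (k + 2)` where `q = |F|` and `k = dim ker L`. The rank hypothesis gives
`|S| ≥ δ q ^ n ≥ q ^ (k + 5)`, so there are at most `|S| q ^ (k + 2) ≤ |S| ^ 2 / q ^ 3` bad pairs.
-/

attribute [local instance] Classical.propDecidable

open Module Submodule Finset

section SpanSingleton

variable {K W : Type*} [DivisionRing K] [AddCommGroup W] [Module K W]

theorem span_singleton_sup_inf_span_singleton_sup_eq {u v w : W} (hv : v ∉ K ∙ u ⊔ K ∙ w) :
    (K ∙ u ⊔ K ∙ w) ⊓ (K ∙ v ⊔ K ∙ w) = K ∙ w := by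
  have hv0 : v ≠ 0 := fun h => hv (h ▸ zero_mem _)
  have hdisj : Disjoint (K ∙ u ⊔ K ∙ w) (K ∙ v) := (disjoint_span_singleton' hv0).2 hv
  rw [inf_comm, sup_comm, sup_inf_assoc_of_le _ le_sup_right, hdisj.symm.eq_bot, sup_bot_eq]

end SpanSingleton

section Counting

variable {K V W : Type*} [Field K] [AddCommGroup V] [Module K V] [AddCommGroup W] [Module K W]

theorem finrank_comap_le_finrank_add_finrank_ker [FiniteDimensional K V] (f : V →ₗ[K] W)
    (P : Submodule K W) [FiniteDimensional K P] :
    finrank K (P.comap f) ≤ finrank K P + finrank K (LinearMap.ker f) := by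
  have hrank := LinearMap.finrank_range_add_finrank_ker (f.domRestrict (P.comap f))
  rw [LinearMap.range_domRestrict, LinearMap.ker_domRestrict] at hrank
  have hmap : finrank K (map f (comap f P)) ≤ finrank K P := finrank_mono (map_comap_le f P)
  have hker :
      finrank K (comap (comap f P).subtype (LinearMap.ker f)) = finrank K (LinearMap.ker f) :=
    (comapSubtypeEquivOfLe (LinearMap.ker_le_comap f)).finrank_eq
  omega

theorem card_filter_mem_comap_le [Fintype K] [Fintype V] (f : V →ₗ[K] W) (P : Submodule K W)
    [FiniteDimensional K P] (S : Finset V) :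
    #(S.filter fun x => f x ∈ P) ≤
      Fintype.card K ^ (finrank K P + finrank K (LinearMap.ker f)) :=
  calc #(S.filter fun x => f x ∈ P)
      ≤ #(univ.filter fun x => x ∈ P.comap f) :=
        card_le_card (filter_subset_filter _ (subset_univ S))
    _ = Fintype.card (P.comap f) := (Fintype.card_subtype _).symm
    _ = Fintype.card K ^ finrank K (P.comap f) := card_eq_pow_finrank
    _ ≤ Fintype.card K ^ (finrank K P + finrank K (LinearMap.ker f)) :=
      Nat.pow_le_pow_right Fintype.card_pos (finrank_comap_le_finrank_add_finrank_ker f P)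

theorem finrank_span_singleton_sup_span_singleton_le (a b : W) :
    finrank K ↥(K ∙ a ⊔ K ∙ b) ≤ 2 := by
  have hline (v : W) : finrank K (K ∙ v) ≤ 1 := by
    simpa using finrank_span_le_card ({v} : Set W)
  linarith [finrank_add_le_finrank_add_finrank (K ∙ a) (K ∙ b), hline a, hline b]

end Counting

theorem card_filter_product_le_card_mul {α β : Type*} (s : Finset α) (t : Finset β)
    (r : α → β → Prop) {N : ℕ} (h : ∀ a ∈ s, #(t.filter (r a)) ≤ N) :
    #((s ×ˢ t).filter fun q => r q.1 q.2) ≤ #s * N :=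
  calc #((s ×ˢ t).filter fun q => r q.1 q.2) = ∑ a ∈ s, #(t.filter (r a)) := by
        simp only [card_filter, sum_product]
    _ ≤ ∑ _a ∈ s, N := sum_le_sum h
    _ = #s * N := by rw [sum_const, smul_eq_mul]

theorem rpow_le_mul_rpow_of_logb_inv_add_le {b δ c r : ℝ} (hb : 1 < b) (hδ : 0 < δ)
    (h : Real.logb b δ⁻¹ + c ≤ r) : b ^ c ≤ δ * b ^ r := by
  have hδinv : δ⁻¹ ≤ b ^ (r - c) :=
    (Real.logb_le_iff_le_rpow hb (inv_pos.2 hδ)).1 (by linarith)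
  calc b ^ c = δ * (δ⁻¹ * b ^ c) := by field_simp
    _ ≤ δ * (b ^ (r - c) * b ^ c) := by gcongr
    _ = δ * b ^ r := by rw [← Real.rpow_add (by linarith), sub_add_cancel]

section Pairs

variable {K V W : Type*} [Field K] [Fintype K] [AddCommGroup V] [Module K V] [Fintype V]
  [AddCommGroup W] [Module K W]

theorem card_filter_inf_ne_span_singleton_le (f : V →ₗ[K] W) (S : Finset V) (c : W) :
    #((S ×ˢ S).filter fun q => (K ∙ f q.1 ⊔ K ∙ c) ⊓ (K ∙ f q.2 ⊔ K ∙ c) ≠ K ∙ c) ≤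
      #S * Fintype.card K ^ (2 + finrank K (LinearMap.ker f)) := by
  have hsub : (S ×ˢ S).filter (fun q => (K ∙ f q.1 ⊔ K ∙ c) ⊓ (K ∙ f q.2 ⊔ K ∙ c) ≠ K ∙ c) ⊆
      (S ×ˢ S).filter fun q => f q.2 ∈ K ∙ f q.1 ⊔ K ∙ c :=
    monotone_filter_right _ fun q _ hne =>
      by_contra fun hq => hne (span_singleton_sup_inf_span_singleton_sup_eq hq)
  refine (card_le_card hsub).trans
    (card_filter_product_le_card_mul S S (fun s t => f t ∈ K ∙ f s ⊔ K ∙ c) fun s _ => ?_)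
  refine (card_filter_mem_comap_le f _ S).trans (Nat.pow_le_pow_right Fintype.card_pos ?_)
  linarith [finrank_span_singleton_sup_span_singleton_le (K := K) (f s) c]

theorem pow_finrank_ker_add_five_le_card (f : V →ₗ[K] W) {δ : ℝ} (hδ : 0 < δ)
    (hrank : Real.logb (Fintype.card K) δ⁻¹ + 5 ≤ (finrank K (LinearMap.range f) : ℝ))
    (S : Finset V) (hS : δ * (Fintype.card V : ℝ) ≤ #S) :
    Fintype.card K ^ (finrank K (LinearMap.ker f) + 5) ≤ #S := by
  set q := Fintype.card K
  set r := finrank K (LinearMap.range f)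
  set k := finrank K (LinearMap.ker f)
  have hq : (1 : ℝ) < q := by exact_mod_cast Fintype.one_lt_card (α := K)
  have h5 : (q : ℝ) ^ 5 ≤ δ * (q : ℝ) ^ r := by
    exact_mod_cast rpow_le_mul_rpow_of_logb_inv_add_le hq hδ hrank
  have hcardV : Fintype.card V = q ^ (r + k) := by
    rw [card_eq_pow_finrank (K := K), LinearMap.finrank_range_add_finrank_ker]
  have : ((q ^ (k + 5) : ℕ) : ℝ) ≤ #S :=
    calc ((q ^ (k + 5) : ℕ) : ℝ) = q ^ 5 * q ^ k := by push_cast; ring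
      _ ≤ δ * q ^ r * q ^ k := by gcongr
      _ = δ * Fintype.card V := by rw [hcardV]; push_cast; ring
      _ ≤ #S := hS
  exact_mod_cast this

theorem card_product_le_two_mul_card_filter_inf_eq (f : V →ₗ[K] W) {δ : ℝ} (hδ : 0 < δ)
    (hrank : Real.logb (Fintype.card K) δ⁻¹ + 5 ≤ (finrank K (LinearMap.range f) : ℝ))
    (S : Finset V) (hS : δ * (Fintype.card V : ℝ) ≤ #S) (c : W) :
    #(S ×ˢ S) ≤
      2 * #((S ×ˢ S).filter fun q => (K ∙ f q.1 ⊔ K ∙ c) ⊓ (K ∙ f q.2 ⊔ K ∙ c) = K ∙ c) := by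
  set q := Fintype.card K
  set k := finrank K (LinearMap.ker f)
  have hlarge : 2 * q ^ (2 + k) ≤ #S := by
    have hq3 : 2 ≤ q ^ 3 := le_trans (by norm_num) (Nat.pow_le_pow_left Fintype.one_lt_card 3)
    calc 2 * q ^ (2 + k) ≤ q ^ 3 * q ^ (2 + k) := Nat.mul_le_mul_right _ hq3
      _ = q ^ (k + 5) := by ring
      _ ≤ #S := pow_finrank_ker_add_five_le_card f hδ hrank S hS
  have hbad : #((S ×ˢ S).filter fun q => ¬(K ∙ f q.1 ⊔ K ∙ c) ⊓ (K ∙ f q.2 ⊔ K ∙ c) = K ∙ c) ≤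
      #S * q ^ (2 + k) := card_filter_inf_ne_span_singleton_le f S c
  have hsplit := card_filter_add_card_filter_not (s := S ×ˢ S)
    (p := fun q => (K ∙ f q.1 ⊔ K ∙ c) ⊓ (K ∙ f q.2 ⊔ K ∙ c) = K ∙ c)
  have : 2 * (#S * q ^ (2 + k)) ≤ #S * #S := by nlinarith
  rw [card_product] at hsplit ⊢
  omega

end Pairs

theorem stmt10 (p n m : ℕ) [Fact p.Prime]
    (L : (Fin n → ZMod p) →ₗ[ZMod p] (Fin m → ZMod p)) (δ : ℝ) (hδ : 0 < δ)
    (hrank : Real.logb (Fintype.card (ZMod p)) δ⁻¹ + 5 ≤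
      (Module.finrank (ZMod p) (LinearMap.range L) : ℝ))
    (S : Finset (Fin n → ZMod p))
    (hS : δ * (Fintype.card (Fin n → ZMod p) : ℝ) ≤ (S.card : ℝ))
    (y : Fin n → ZMod p) :
    (S ×ˢ S).card ≤ 2 * ((S ×ˢ S).filter fun q =>
      (Submodule.span (ZMod p) {L q.1} ⊔ Submodule.span (ZMod p) {L y}) ⊓
        (Submodule.span (ZMod p) {L q.2} ⊔ Submodule.span (ZMod p) {L y}) =
      Submodule.span (ZMod p) {L y}).card :=
  card_product_le_two_mul_card_filter_inf_eq L hδ hrank S hS (L y)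
end

section
/- Let k ≥ 1 and suppose every nonzero map in the span L̄ of a family L of linear maps F^n → F^m (with dim L̄ = k) has rank greater than 4k + log_{|F|} δ^{-1} + 1. Then for every S ⊆ F^n of density at least δ and every y ∈ F^n, Pr_{s,s' ∈ S}[(L̄(s) + L̄(y)) ∩ (L̄(s') + L̄(y)) ≠ L̄(y)] ≤ 1/2. -/
attribute [local instance] Classical.propDecidable

/-!
If `(L̄(s) + L̄(y)) ∩ (L̄(s') + L̄(y)) ≠ L̄(y)`, then `L s - L' s' ∈ L̄(y)` for some `L ≠ 0`
and `L'` in `L̄`. For fixed `L, L', s'` the admissible `s` lie in one coset of `L⁻¹(L̄(y))`, whose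
dimension is at most `n - rank L + k`; by the rank hypothesis such a coset meets `S` in at most a
`q^{-(3k+1)}` fraction of `S`. A union bound over the `q^{2k}` pairs `(L, L')` leaves a fraction
`q^{-(k+1)} ≤ 1/2` of bad pairs `(s, s')`.
-/

open Submodule Module Finset

theorem Submodule.exists_sub_mem_of_sup_inf_sup_ne {R V : Type*} [Ring R] [AddCommGroup V]
    [Module R V] {A B W : Submodule R V} (h : (A ⊔ W) ⊓ (B ⊔ W) ≠ W) :
    ∃ a ∈ A, ∃ b ∈ B, a ∉ W ∧ a - b ∈ W := by
  obtain ⟨v, hv, hvW⟩ := SetLike.not_le_iff_exists.mp fun hle =>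
    h (le_antisymm hle (le_inf le_sup_right le_sup_right))
  obtain ⟨a, ha, w, hw, rfl⟩ := mem_sup.mp (mem_inf.mp hv).1
  obtain ⟨b, hb, w', hw', hbw⟩ := mem_sup.mp (mem_inf.mp hv).2
  refine ⟨a, ha, b, hb, fun haW => hvW (W.add_mem haW hw), ?_⟩
  rw [show a - b = w' - w by linear_combination (norm := module) -hbw]
  exact W.sub_mem hw' hw

theorem LinearMap.finrank_comap_add_finrank_range_le {K M N : Type*} [DivisionRing K]
    [AddCommGroup M] [Module K M] [FiniteDimensional K M] [AddCommGroup N] [Module K N]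
    (f : M →ₗ[K] N) (W : Submodule K N) [FiniteDimensional K W] :
    finrank K (W.comap f) + finrank K (range f) ≤ finrank K M + finrank K W := by
  have hrange : finrank K (range (f.domRestrict (W.comap f))) ≤ finrank K W := by
    rw [range_domRestrict]
    exact finrank_mono (map_comap_le f W)
  have hker : finrank K (ker (f.domRestrict (W.comap f))) ≤ finrank K (ker f) := by
    rw [ker_domRestrict, ← finrank_map_subtype_eq]
    exact finrank_mono ((map_comap_subtype _ _).trans_le inf_le_right)
  have := (f.domRestrict (W.comap f)).finrank_range_add_finrank_ker
  have := f.finrank_range_add_finrank_ker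
  omega

theorem LinearMap.card_filter_sub_mem_le_natCard_comap {R M N : Type*} [Ring R]
    [AddCommGroup M] [Module R M] [Finite M] [AddCommGroup N] [Module R N]
    (f : M →ₗ[R] N) (W : Submodule R N) (c : N) (T : Finset M) :
    #{x ∈ T | f x - c ∈ W} ≤ Nat.card (W.comap f) := by
  rcases Finset.eq_empty_or_nonempty {x ∈ T | f x - c ∈ W} with he | ⟨x₀, hx₀⟩
  · simp [he]
  have : Fintype M := Fintype.ofFinite M
  rw [← SetLike.coe_sort_coe, Nat.card_eq_card_toFinset]
  refine card_le_card_of_injOn (· - x₀) (fun x hx => ?_) (fun x _ x' _ h => sub_left_injective h)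
  rw [mem_coe, mem_filter] at hx
  rw [mem_filter] at hx₀
  simpa [mem_comap] using W.sub_mem hx.2 hx₀.2

theorem Finset.card_filter_product_eq_sum {α β : Type*} (s : Finset α) (t : Finset β)
    (P : α × β → Prop) [DecidablePred P] :
    #{q ∈ s ×ˢ t | P q} = ∑ b ∈ t, #{a ∈ s | P (a, b)} := by
  simp only [card_filter, sum_product_right]

namespace Submodule

variable {K M N : Type*} [CommRing K] [AddCommGroup M] [Module K M] [AddCommGroup N] [Module K N]

/-- `Λ.evalAt x` is the paper's `L̄(x) = {L x : L ∈ L̄}`. -/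
def evalAt (Λ : Submodule K (M →ₗ[K] N)) (x : M) : Submodule K N :=
  Λ.map (LinearMap.applyₗ x)

instance (Λ : Submodule K (M →ₗ[K] N)) [Module.Finite K Λ] (x : M) :
    Module.Finite K (Λ.evalAt x) :=
  Module.Finite.map Λ _

theorem span_image_apply (s : Set (M →ₗ[K] N)) (x : M) :
    span K ((fun L => L x) '' s) = (span K s).evalAt x := by
  rw [evalAt, map_span]
  rfl

theorem exists_ne_zero_sub_mem_evalAt {Λ : Submodule K (M →ₗ[K] N)} {x x' y : M}
    (h : (Λ.evalAt x ⊔ Λ.evalAt y) ⊓ (Λ.evalAt x' ⊔ Λ.evalAt y) ≠ Λ.evalAt y) :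
    ∃ L ∈ Λ, ∃ L' ∈ Λ, L ≠ 0 ∧ L x - L' x' ∈ Λ.evalAt y := by
  obtain ⟨_, ⟨L, hL, rfl⟩, _, ⟨L', hL', rfl⟩, hLx, hsub⟩ :=
    exists_sub_mem_of_sup_inf_sup_ne h
  refine ⟨L, hL, L', hL', ?_, hsub⟩
  rintro rfl
  exact hLx (zero_mem _)

end Submodule

section FiniteField

variable {K M N : Type*} [Field K] [Finite K] [AddCommGroup M] [Module K M] [Finite M]
  [AddCommGroup N] [Module K N] (Λ : Submodule K (M →ₗ[K] N)) [FiniteDimensional K Λ]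
  (S : Finset M)

theorem card_filter_sub_mem_evalAt_mul_le {L : M →ₗ[K] N} (c : N) (y : M)
    (hL : Nat.card K ^ (4 * finrank K Λ + 1) * Nat.card M
      ≤ #S * Nat.card K ^ finrank K L.range) :
    #{x ∈ S | L x - c ∈ Λ.evalAt y} * Nat.card K ^ (3 * finrank K Λ + 1) ≤ #S := by
  set q := Nat.card K
  set k := finrank K Λ
  have hq : 0 < q := Nat.card_pos
  have hdimV : finrank K (Λ.evalAt y) ≤ k := finrank_map_le _ _
  have hdim := L.finrank_comap_add_finrank_range_le (Λ.evalAt y)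
  have hcard : #{x ∈ S | L x - c ∈ Λ.evalAt y} ≤ q ^ finrank K ((Λ.evalAt y).comap L) := by
    rw [← Module.natCard_eq_pow_finrank]
    exact L.card_filter_sub_mem_le_natCard_comap _ c S
  rw [Module.natCard_eq_pow_finrank (K := K)] at hL
  refine Nat.le_of_mul_le_mul_right ?_ (pow_pos hq (finrank K L.range))
  calc #{x ∈ S | L x - c ∈ Λ.evalAt y} * q ^ (3 * k + 1) * q ^ finrank K L.range
      ≤ q ^ finrank K ((Λ.evalAt y).comap L) * q ^ (3 * k + 1) * q ^ finrank K L.range := by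
        gcongr
    _ ≤ q ^ (4 * k + 1) * q ^ finrank K M := by
        rw [← pow_add, ← pow_add, ← pow_add]
        exact Nat.pow_le_pow_right hq (by omega)
    _ ≤ #S * q ^ finrank K L.range := hL

theorem card_filter_evalAt_inf_ne_mul_le (x' y : M)
    (hrank : ∀ L ∈ Λ, L ≠ 0 → Nat.card K ^ (4 * finrank K Λ + 1) * Nat.card M
      ≤ #S * Nat.card K ^ finrank K L.range) :
    #{x ∈ S | (Λ.evalAt x ⊔ Λ.evalAt y) ⊓ (Λ.evalAt x' ⊔ Λ.evalAt y) ≠ Λ.evalAt y}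
      * Nat.card K ^ (3 * finrank K Λ + 1) ≤ Nat.card K ^ (2 * finrank K Λ) * #S := by
  have : Finite Λ := Module.finite_of_finite K
  have : Fintype Λ := Fintype.ofFinite Λ
  set q := Nat.card K
  set k := finrank K Λ
  set T : Finset (Λ × Λ) := {P | P.1 ≠ 0}
  set B :=
    {x ∈ S | (Λ.evalAt x ⊔ Λ.evalAt y) ⊓ (Λ.evalAt x' ⊔ Λ.evalAt y) ≠ Λ.evalAt y}
  set C : Λ × Λ → Finset M :=
    fun P => {x ∈ S | (P.1 : M →ₗ[K] N) x - (P.2 : M →ₗ[K] N) x' ∈ Λ.evalAt y}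
  have hcover : B ⊆ T.biUnion C := by
    intro x hx
    rw [mem_filter] at hx
    obtain ⟨L, hL, L', hL', hL0, hsub⟩ := exists_ne_zero_sub_mem_evalAt hx.2
    refine mem_biUnion.mpr ⟨(⟨L, hL⟩, ⟨L', hL'⟩), ?_, mem_filter.mpr ⟨hx.1, hsub⟩⟩
    simpa [T] using hL0
  have hT : #T ≤ q ^ (2 * k) := by
    calc #T ≤ Fintype.card (Λ × Λ) := card_filter_le _ _
      _ = q ^ (2 * k) := by
        rw [Fintype.card_prod, Fintype.card_eq_nat_card, Module.natCard_eq_pow_finrank (K := K),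
          ← pow_add, two_mul]
  calc #B * q ^ (3 * k + 1) ≤ (∑ P ∈ T, #(C P)) * q ^ (3 * k + 1) := by
        gcongr
        exact (card_le_card hcover).trans card_biUnion_le
    _ = ∑ P ∈ T, #(C P) * q ^ (3 * k + 1) := sum_mul _ _ _
    _ ≤ #T * #S := by
        refine sum_le_card_nsmul _ _ _ fun P hP => ?_
        exact card_filter_sub_mem_evalAt_mul_le Λ S _ y (hrank _ P.1.2 (by simpa [T] using hP))
    _ ≤ q ^ (2 * k) * #S := by gcongr

theorem two_mul_card_filter_evalAt_inf_ne_le (y : M)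
    (hrank : ∀ L ∈ Λ, L ≠ 0 → Nat.card K ^ (4 * finrank K Λ + 1) * Nat.card M
      ≤ #S * Nat.card K ^ finrank K L.range) :
    2 * #{P ∈ S ×ˢ S |
        (Λ.evalAt P.1 ⊔ Λ.evalAt y) ⊓ (Λ.evalAt P.2 ⊔ Λ.evalAt y) ≠ Λ.evalAt y} ≤ #S * #S := by
  set q := Nat.card K
  set k := finrank K Λ
  have hq : 1 < q := Finite.one_lt_card
  have hq2 : 2 * q ^ (2 * k) ≤ q ^ (3 * k + 1) := by
    calc 2 * q ^ (2 * k) ≤ q * q ^ (3 * k) := by gcongr <;> omega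
      _ = q ^ (3 * k + 1) := by ring
  rw [card_filter_product_eq_sum]
  set B := fun x' =>
    #{x ∈ S | (Λ.evalAt x ⊔ Λ.evalAt y) ⊓ (Λ.evalAt x' ⊔ Λ.evalAt y) ≠ Λ.evalAt y}
  refine Nat.le_of_mul_le_mul_right ?_ (pow_pos (zero_lt_one.trans hq) (3 * k + 1))
  calc 2 * (∑ x' ∈ S, B x') * q ^ (3 * k + 1) = 2 * ∑ x' ∈ S, B x' * q ^ (3 * k + 1) := by
        rw [mul_assoc, sum_mul]
    _ ≤ 2 * ∑ _x' ∈ S, q ^ (2 * k) * #S := by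
        gcongr 2 * ?_
        exact sum_le_sum fun x' _ => card_filter_evalAt_inf_ne_mul_le Λ S x' y hrank
    _ = #S * #S * (2 * q ^ (2 * k)) := by
        rw [sum_const, smul_eq_mul]
        ring
    _ ≤ #S * #S * q ^ (3 * k + 1) := by gcongr

end FiniteField

theorem Real.rpow_lt_mul_rpow_of_add_logb_inv_lt {b δ a r : ℝ} (hb : 1 < b) (hδ : 0 < δ)
    (h : a + Real.logb b δ⁻¹ < r) : b ^ a < δ * b ^ r := by
  have := Real.rpow_lt_rpow_of_exponent_lt hb h
  rwa [Real.rpow_add (by linarith), Real.rpow_logb (by linarith) hb.ne' (inv_pos.2 hδ),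
    ← div_eq_mul_inv, div_lt_iff₀ hδ, mul_comm] at this

theorem stmt12_general (p n m k : ℕ) [Fact p.Prime] (δ : ℝ) (hδ : 0 < δ)
    (𝓛 : Set ((Fin n → ZMod p) →ₗ[ZMod p] (Fin m → ZMod p)))
    (hdim : Module.finrank (ZMod p) (Submodule.span (ZMod p) 𝓛) = k)
    (hrank : ∀ L ∈ Submodule.span (ZMod p) 𝓛, L ≠ 0 →
      4 * (k : ℝ) + Real.logb (Fintype.card (ZMod p)) δ⁻¹ + 1 <
        (Module.finrank (ZMod p) (LinearMap.range L) : ℝ))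
    (S : Finset (Fin n → ZMod p))
    (hS : δ * (Fintype.card (Fin n → ZMod p) : ℝ) ≤ (S.card : ℝ))
    (y : Fin n → ZMod p) :
    2 * ((S ×ˢ S).filter fun q =>
        (Submodule.span (ZMod p) ((fun L => L q.1) '' 𝓛) ⊔
            Submodule.span (ZMod p) ((fun L => L y) '' 𝓛)) ⊓
          (Submodule.span (ZMod p) ((fun L => L q.2) '' 𝓛) ⊔
            Submodule.span (ZMod p) ((fun L => L y) '' 𝓛)) ≠
        Submodule.span (ZMod p) ((fun L => L y) '' 𝓛)).card ≤ (S ×ˢ S).card := by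
  simp only [span_image_apply, card_product]
  refine two_mul_card_filter_evalAt_inf_ne_le _ S y fun L hL hL0 => ?_
  rw [hdim, Nat.card_zmod, Nat.card_eq_fintype_card]
  set r := finrank (ZMod p) L.range
  have hp : (1 : ℝ) < p := Nat.one_lt_cast.2 (Fact.out : p.Prime).one_lt
  have hpow : (p : ℝ) ^ (4 * k + 1) < δ * (p : ℝ) ^ r := by
    have := Real.rpow_lt_mul_rpow_of_add_logb_inv_lt (a := (4 * k + 1 : ℕ)) (r := r) hp hδ
      (by rw [ZMod.card] at hrank; push_cast; linarith [hrank L hL hL0])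
    rwa [Real.rpow_natCast, Real.rpow_natCast] at this
  suffices (p : ℝ) ^ (4 * k + 1) * Fintype.card (Fin n → ZMod p) ≤ S.card * (p : ℝ) ^ r by
    exact_mod_cast this
  calc (p : ℝ) ^ (4 * k + 1) * Fintype.card (Fin n → ZMod p)
      ≤ δ * (p : ℝ) ^ r * Fintype.card (Fin n → ZMod p) := by gcongr
    _ = δ * Fintype.card (Fin n → ZMod p) * (p : ℝ) ^ r := mul_right_comm _ _ _
    _ ≤ S.card * (p : ℝ) ^ r := by gcongr

theorem stmt12 (p n m k : ℕ) [Fact p.Prime] (hk : 1 ≤ k) (δ : ℝ) (hδ : 0 < δ)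
    (𝓛 : Set ((Fin n → ZMod p) →ₗ[ZMod p] (Fin m → ZMod p))) (hfin : 𝓛.Finite)
    (hdim : Module.finrank (ZMod p) (Submodule.span (ZMod p) 𝓛) = k)
    (hrank : ∀ L ∈ Submodule.span (ZMod p) 𝓛, L ≠ 0 →
      4 * (k : ℝ) + Real.logb (Fintype.card (ZMod p)) δ⁻¹ + 1 <
        (Module.finrank (ZMod p) (LinearMap.range L) : ℝ))
    (S : Finset (Fin n → ZMod p))
    (hS : δ * (Fintype.card (Fin n → ZMod p) : ℝ) ≤ (S.card : ℝ))
    (y : Fin n → ZMod p) :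
    2 * ((S ×ˢ S).filter fun q =>
        (Submodule.span (ZMod p) ((fun L => L q.1) '' 𝓛) ⊔
            Submodule.span (ZMod p) ((fun L => L y) '' 𝓛)) ⊓
          (Submodule.span (ZMod p) ((fun L => L q.2) '' 𝓛) ⊔
            Submodule.span (ZMod p) ((fun L => L y) '' 𝓛)) ≠
        Submodule.span (ZMod p) ((fun L => L y) '' 𝓛)).card ≤ (S ×ˢ S).card :=
  stmt12_general p n m k δ hδ 𝓛 hdim hrank S hS y
end

section
/- For each y ∈ F^n, let U_y ⊆ F^m be a subspace of dimension d, and let L_y be finite collections of affine maps F^n → F^m. Sample a random function f : F^n → F^m by picking f(x) ∈ U_x uniformly and independently for each x. Suppose for a proportion at least 1/8 of triples (y, z, w) ∈ (F^n)³ there exist a ∈ U_{y+z}, b ∈ U_z, c ∈ U_{y+w}, d' ∈ U_w with a - b = c - d' ≠ 0, b ∉ span(L_z(z)), d' ∉ span(L_w(w)). Then Pr over (y,z,w) and f of the event [f(y+z) - f(z) = f(y+w) - f(w), f(z) ∈ U_z \ span(L_z(z)), f(w) ∈ U_w \ span(L_w(w))] is at least (1/8)·|F|^{-4d}. -/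
/-!
Fix a witnessed triple `(y, z, w)`. The event only involves the values of `f` at the at most four
points `y + z, z, y + w, w`; when the witness values `a, b, c, d'` can be assigned to these points
consistently, a `|F|^{-4d}` fraction of the admissible `f` realize the event. Consistency fails
only for the degenerate triples, those with `y + z = w` or `y + w = z`. Such a triple is charged
to `(0, z, w)`, where the event only asks `f z = b` and `f w = d'`, a `|F|^{-2d} ≥ 3 |F|^{-4d}`
fraction; at most three triples are charged to any one.
-/

attribute [local instance] Classical.propDecidable

open Finset Function

section Counting

variable {α β : Type*} [Fintype α] [Fintype β]

theorem card_filter_eqOn_forall_mem (S : α → Set β) (s : Finset α) {g : α → β}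
    (hg : ∀ x ∈ s, g x ∈ S x) :
    #{f ∈ ({f | ∀ x, f x ∈ S x} : Finset (α → β)) | ∀ x ∈ s, f x = g x} =
      ∏ x ∈ sᶜ, Nat.card (S x) := by
  have hpi : {f ∈ ({f | ∀ x, f x ∈ S x} : Finset (α → β)) | ∀ x ∈ s, f x = g x} =
      Fintype.piFinset fun x => if x ∈ s then {g x} else (S x).toFinset := by
    ext f
    simp only [mem_filter, mem_univ, true_and, Fintype.mem_piFinset]
    refine ⟨fun ⟨hS, hs⟩ x => ?_, fun h => ⟨fun x => ?_, fun x hx => by simpa [hx] using h x⟩⟩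
    · split_ifs with hx
      · simp [hs x hx]
      · simpa using hS x
    · by_cases hx : x ∈ s
      · simpa [hx] using (by simpa [hx] using h x : f x = g x) ▸ hg x hx
      · simpa [hx] using h x
  rw [hpi, Fintype.card_piFinset]
  simp only [apply_ite card, card_singleton]
  rw [prod_ite, prod_const_one, one_mul, filter_not, filter_mem_eq_inter, univ_inter,
    ← compl_eq_univ_sdiff]
  exact prod_congr rfl fun x _ => (Nat.card_eq_card_toFinset (S x)).symm

theorem card_forall_mem_le_pow_mul_card_filter (S : α → Set β) {q : ℕ}
    (hS : ∀ x, Nat.card (S x) = q) (s : Finset α) {P : (α → β) → Prop}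
    (hP : ∀ f f', (∀ x ∈ s, f x = f' x) → P f → P f') {g : α → β} (hg : ∀ x, g x ∈ S x)
    (hPg : P g) :
    #({f | ∀ x, f x ∈ S x} : Finset (α → β)) ≤
      q ^ #s * #{f ∈ ({f | ∀ x, f x ∈ S x} : Finset (α → β)) | P f} := by
  have hcount := card_filter_eqOn_forall_mem S s fun x _ => hg x
  simp only [hS, prod_const] at hcount
  calc #({f | ∀ x, f x ∈ S x} : Finset (α → β))
      = q ^ Fintype.card α := by
        simpa only [notMem_empty, IsEmpty.forall_iff, implies_true, filter_true, compl_empty, hS,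
          prod_const, card_univ] using card_filter_eqOn_forall_mem S ∅ (g := g) (by simp)
    _ = q ^ #s * #{f ∈ ({f | ∀ x, f x ∈ S x} : Finset (α → β)) | ∀ x ∈ s, f x = g x} := by
        rw [hcount, ← pow_add, card_add_card_compl]
    _ ≤ q ^ #s * #{f ∈ ({f | ∀ x, f x ∈ S x} : Finset (α → β)) | P f} :=
        Nat.mul_le_mul_left _ <| card_le_card <| monotone_filter_right _
          fun f _ hfg => hP g f (fun x hx => (hfg x hx).symm) hPg

end Counting

theorem update_mem_of_forall_mem {α β : Type*} {S : α → Set β} {g : α → β}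
    (hg : ∀ x, g x ∈ S x) {i : α} {v : β} (hv : v ∈ S i) (x : α) : update g i v x ∈ S x := by
  rcases eq_or_ne x i with rfl | hx
  · simpa
  · simpa [hx] using hg x

theorem card_filter_product_univ {α γ : Type*} [Fintype γ] (s : Finset α) (P : α × γ → Prop)
    [DecidablePred P] : #{x ∈ s ×ˢ univ | P x} = ∑ c : γ, #{a ∈ s | P (a, c)} := by
  simp only [card_filter, sum_product_right]

section TripleEvent

variable {K V W : Type*} [Field K] [AddCommGroup V] [AddCommGroup W] [Module K W]
  (U Sp : V → Submodule K W)

def HasWitness (y z w : V) : Prop :=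
  ∃ a ∈ U (y + z), ∃ b ∈ U z, ∃ c ∈ U (y + w), ∃ d' ∈ U w,
    a - b = c - d' ∧ b ∉ Sp z ∧ d' ∉ Sp w

def TripleEvent (f : V → W) (y z w : V) : Prop :=
  f (y + z) - f z = f (y + w) - f w ∧ f z ∈ U z ∧ f z ∉ Sp z ∧ f w ∈ U w ∧ f w ∉ Sp w

noncomputable abbrev admissible [Fintype V] [Fintype W] : Finset (V → W) := {f | ∀ x, f x ∈ U x}

def IsDegenerate (t : V × V × V) : Prop := t.1 = t.2.1 - t.2.2 ∨ t.1 = t.2.2 - t.2.1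

noncomputable def collapseDegenerate (t : V × V × V) : V × V × V :=
  if IsDegenerate t then (0, t.2.1, t.2.2) else t

variable {U Sp}

theorem TripleEvent.congr {f f' : V → W} {y z w : V}
    (h : ∀ x ∈ ({y + z, z, y + w, w} : Finset V), f x = f' x) (hf : TripleEvent U Sp f y z w) :
    TripleEvent U Sp f' y z w := by
  simp only [mem_insert, mem_singleton, forall_eq_or_imp, forall_eq] at h
  obtain ⟨h₁, h₂, h₃, h₄⟩ := h
  rwa [TripleEvent, ← h₁, ← h₂, ← h₃, ← h₄]

theorem exists_tripleEvent_zero {z w : V} {b d' : W} (hb : b ∈ U z) (hbs : b ∉ Sp z)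
    (hd' : d' ∈ U w) (hds : d' ∉ Sp w) :
    ∃ f : V → W, (∀ x, f x ∈ U x) ∧ TripleEvent U Sp f 0 z w := by
  have hzero : ∀ x, (0 : V → W) x ∈ U x := fun x => zero_mem _
  refine ⟨update (update 0 w d') z b,
    update_mem_of_forall_mem (update_mem_of_forall_mem hzero hd') hb, ?_⟩
  rcases eq_or_ne w z with rfl | hwz
  · simp [TripleEvent, hb, hbs]
  · simp [TripleEvent, hwz, hb, hbs, hd', hds]

theorem exists_tripleEvent {y z w : V} (h : HasWitness U Sp y z w) (h₁ : y ≠ z - w)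
    (h₂ : y ≠ w - z) : ∃ f : V → W, (∀ x, f x ∈ U x) ∧ TripleEvent U Sp f y z w := by
  obtain ⟨a, ha, b, hb, c, hc, d', hd', habcd, hbs, hds⟩ := h
  have hzero : ∀ x, (0 : V → W) x ∈ U x := fun x => zero_mem _
  rcases eq_or_ne y 0 with rfl | hy
  · exact exists_tripleEvent_zero hb hbs hd' hds
  rcases eq_or_ne z w with rfl | hzw
  · exact ⟨update 0 z b, update_mem_of_forall_mem hzero hb, by simp [TripleEvent, hb, hbs]⟩
  have e₁ : z ≠ y + z := by simpa [eq_comm] using hy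
  have e₂ : y + w ≠ y + z := by simpa [eq_comm] using hzw
  have e₃ : y + w ≠ z := fun h => h₁ (eq_sub_of_add_eq h)
  have e₄ : w ≠ y + w := by simpa [eq_comm] using hy
  have e₅ : w ≠ y + z := fun h => h₂ (eq_sub_of_add_eq h.symm)
  refine ⟨update (update (update (update 0 w d') (y + w) c) z b) (y + z) a,
    update_mem_of_forall_mem (update_mem_of_forall_mem
      (update_mem_of_forall_mem (update_mem_of_forall_mem hzero hd') hc) hb) ha, ?_⟩
  simp [TripleEvent, e₁, e₂, e₃, e₄, e₅, hzw.symm, habcd, hb, hbs, hd', hds]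

variable [Fintype K] [Fintype V] [Fintype W] {d : ℕ}

theorem filter_collapseDegenerate_eq_subset (t' : V × V × V) :
    ({t | collapseDegenerate t = t'} : Finset (V × V × V)) ⊆
      {t', (t'.2.1 - t'.2.2, t'.2.1, t'.2.2), (t'.2.2 - t'.2.1, t'.2.1, t'.2.2)} := by
  intro ⟨y, z, w⟩ ht
  have ht := (mem_filter.mp ht).2
  unfold collapseDegenerate IsDegenerate at ht
  split_ifs at ht with hdeg <;> subst ht
  · dsimp only at hdeg ⊢
    rcases hdeg with rfl | rfl <;> simp
  · simp

theorem card_admissible_le_pow_mul_card_tripleEvent (hU : ∀ x, Module.finrank K (U x) = d)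
    {y z w : V} (h : ∃ f : V → W, (∀ x, f x ∈ U x) ∧ TripleEvent U Sp f y z w) :
    #(admissible U) ≤ (Fintype.card K ^ d) ^ #({y + z, z, y + w, w} : Finset V) *
      #{f ∈ admissible U | TripleEvent U Sp f y z w} := by
  obtain ⟨g, hg, hgE⟩ := h
  refine card_forall_mem_le_pow_mul_card_filter (fun x => (U x : Set W)) (fun x => ?_) _
    (fun _ _ h hf => TripleEvent.congr h hf) hg hgE
  rw [SetLike.coe_sort_coe, Module.natCard_eq_pow_finrank (K := K), hU, Nat.card_eq_fintype_card]

theorem card_admissible_le_of_hasWitness (hU : ∀ x, Module.finrank K (U x) = d) {y z w : V}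
    (h : HasWitness U Sp y z w) (h₁ : y ≠ z - w) (h₂ : y ≠ w - z) :
    #(admissible U) ≤ (Fintype.card K ^ d) ^ 4 * #{f ∈ admissible U | TripleEvent U Sp f y z w} :=
  (card_admissible_le_pow_mul_card_tripleEvent hU (exists_tripleEvent h h₁ h₂)).trans <|
    Nat.mul_le_mul_right _ <|
      Nat.pow_le_pow_right (Nat.one_le_pow _ _ Fintype.card_pos) card_le_four

theorem three_mul_card_admissible_le_of_hasWitness (hU : ∀ x, Module.finrank K (U x) = d)
    {y z w : V} (h : HasWitness U Sp y z w) :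
    3 * #(admissible U) ≤
      (Fintype.card K ^ d) ^ 4 * #{f ∈ admissible U | TripleEvent U Sp f 0 z w} := by
  obtain ⟨-, -, b, hb, -, -, d', hd', -, hbs, hds⟩ := h
  set q := Fintype.card K ^ d
  have hd : 1 ≤ d := by
    rw [← hU z, Nat.one_le_iff_ne_zero, Ne, Submodule.finrank_eq_zero]
    exact fun h => hbs (by simp_all)
  have hq : 2 ≤ q := le_trans Fintype.one_lt_card (Nat.le_self_pow (by omega) _)
  have hsupp : #({0 + z, z, 0 + w, w} : Finset V) ≤ 2 := by simpa using card_le_two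
  have hN := card_admissible_le_pow_mul_card_tripleEvent hU (exists_tripleEvent_zero hb hbs hd' hds)
  calc 3 * #(admissible U)
      ≤ q ^ 2 * #(admissible U) := Nat.mul_le_mul_right _ (by nlinarith)
    _ ≤ q ^ 2 * (q ^ 2 * #{f ∈ admissible U | TripleEvent U Sp f 0 z w}) :=
        Nat.mul_le_mul_left _ <|
          hN.trans (Nat.mul_le_mul_right _ (Nat.pow_le_pow_right (by omega) hsupp))
    _ = q ^ 4 * #{f ∈ admissible U | TripleEvent U Sp f 0 z w} := by ring

theorem card_admissible_mul_card_fiber_le (hU : ∀ x, Module.finrank K (U x) = d)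
    (t' : V × V × V) :
    #(admissible U) * #{t | HasWitness U Sp t.1 t.2.1 t.2.2 ∧ collapseDegenerate t = t'} ≤
      (Fintype.card K ^ d) ^ 4 * #{f ∈ admissible U | TripleEvent U Sp f t'.1 t'.2.1 t'.2.2} := by
  set fiber : Finset (V × V × V) :=
    {t | HasWitness U Sp t.1 t.2.1 t.2.2 ∧ collapseDegenerate t = t'}
  by_cases hdeg : ∃ t ∈ fiber, IsDegenerate t
  · obtain ⟨t, ht, hdeg⟩ := hdeg
    obtain ⟨-, hW, rfl⟩ := mem_filter.mp ht
    have hfiber : #fiber ≤ 3 :=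
      (card_le_card ((monotone_filter_right _ fun _ _ h => h.2).trans
        (filter_collapseDegenerate_eq_subset _))).trans card_le_three
    rw [collapseDegenerate, if_pos hdeg]
    calc #(admissible U) * #fiber
        ≤ 3 * #(admissible U) := by rw [mul_comm]; exact Nat.mul_le_mul_right _ hfiber
      _ ≤ _ := three_mul_card_admissible_le_of_hasWitness hU hW
  · push Not at hdeg
    obtain hempty | ⟨t, ht⟩ := fiber.eq_empty_or_nonempty
    · simp [hempty]
    have hsub : fiber ⊆ {t'} := fun s hs => by
      simpa [collapseDegenerate, hdeg s hs] using (mem_filter.mp hs).2.2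
    obtain ⟨-, hW, hct⟩ := mem_filter.mp ht
    rw [collapseDegenerate, if_neg (hdeg t ht)] at hct
    subst hct
    exact (mul_le_of_le_one_right' ((card_le_card hsub).trans (card_singleton t).le)).trans
      (card_admissible_le_of_hasWitness hU hW (not_or.mp (hdeg t ht)).1 (not_or.mp (hdeg t ht)).2)

theorem card_admissible_mul_card_hasWitness_le (hU : ∀ x, Module.finrank K (U x) = d) :
    #(admissible U) * #{t : V × V × V | HasWitness U Sp t.1 t.2.1 t.2.2} ≤
      (Fintype.card K ^ d) ^ 4 *
        ∑ t : V × V × V, #{f ∈ admissible U | TripleEvent U Sp f t.1 t.2.1 t.2.2} := by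
  rw [card_eq_sum_card_fiberwise (f := collapseDegenerate) (t := univ)
    fun _ _ => mem_coe.2 (mem_univ _), mul_sum, mul_sum]
  refine sum_le_sum fun t' _ => ?_
  rw [filter_filter]
  exact card_admissible_mul_card_fiber_le hU t'

theorem le_sum_card_tripleEvent (hU : ∀ x, Module.finrank K (U x) = d)
    (hW : (Fintype.card V : ℝ) ^ 3 ≤ 8 * #{t : V × V × V | HasWitness U Sp t.1 t.2.1 t.2.2}) :
    1 / 8 * ((Fintype.card K : ℝ) ^ (4 * d))⁻¹ * #(admissible U) * (Fintype.card V : ℝ) ^ 3 ≤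
      ((∑ t : V × V × V, #{f ∈ admissible U | TripleEvent U Sp f t.1 t.2.1 t.2.2} : ℕ) : ℝ) := by
  have hc : (0 : ℝ) < (Fintype.card K : ℝ) ^ (4 * d) := by positivity
  have hcount : (#(admissible U) : ℝ) * #{t : V × V × V | HasWitness U Sp t.1 t.2.1 t.2.2} ≤
      (Fintype.card K : ℝ) ^ (4 * d) *
        ((∑ t : V × V × V, #{f ∈ admissible U | TripleEvent U Sp f t.1 t.2.1 t.2.2} : ℕ) : ℝ) := by
    rw [mul_comm 4 d, pow_mul]
    exact_mod_cast card_admissible_mul_card_hasWitness_le hU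
  calc _ ≤ 1 / 8 * ((Fintype.card K : ℝ) ^ (4 * d))⁻¹ * #(admissible U) *
        (8 * #{t : V × V × V | HasWitness U Sp t.1 t.2.1 t.2.2}) := by gcongr
    _ = ((Fintype.card K : ℝ) ^ (4 * d))⁻¹ *
        (#(admissible U) * #{t : V × V × V | HasWitness U Sp t.1 t.2.1 t.2.2}) := by ring
    _ ≤ _ := by rwa [inv_mul_le_iff₀ hc]

end TripleEvent

theorem stmt13_general (p n m d : ℕ) [Fact p.Prime]
    (U : (Fin n → ZMod p) → Submodule (ZMod p) (Fin m → ZMod p))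
    (hU : ∀ y, Module.finrank (ZMod p) (U y) = d)
    -- collections of affine maps x ↦ T x + b, encoded by pairs (T, b); 𝓛 y is the
    -- collection attached to y, and `spanEval y x` is the span of {L(x) : L ∈ 𝓛 y}
    (𝓛 : (Fin n → ZMod p) →
      Set (((Fin n → ZMod p) →ₗ[ZMod p] (Fin m → ZMod p)) × (Fin m → ZMod p)))
    (hWitness : (Fintype.card (Fin n → ZMod p) : ℝ) ^ 3 ≤ 8 *
      ((Finset.univ.filter fun t : (Fin n → ZMod p) × (Fin n → ZMod p) × (Fin n → ZMod p) =>
        ∃ a ∈ U (t.1 + t.2.1), ∃ b ∈ U t.2.1, ∃ c ∈ U (t.1 + t.2.2), ∃ d' ∈ U t.2.2,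
          a - b = c - d' ∧ a - b ≠ 0 ∧
          b ∉ Submodule.span (ZMod p) ((fun Lb => Lb.1 t.2.1 + Lb.2) '' 𝓛 t.2.1) ∧
          d' ∉ Submodule.span (ZMod p) ((fun Lb => Lb.1 t.2.2 + Lb.2) '' 𝓛 t.2.2)).card : ℝ)) :
    (1 / 8 : ℝ) * ((Fintype.card (ZMod p) : ℝ) ^ (4 * d))⁻¹ *
        ((Finset.univ.filter fun f : (Fin n → ZMod p) → (Fin m → ZMod p) =>
          ∀ x, f x ∈ U x).card : ℝ) *
        (Fintype.card (Fin n → ZMod p) : ℝ) ^ 3 ≤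
      ((((Finset.univ.filter fun f : (Fin n → ZMod p) → (Fin m → ZMod p) =>
            ∀ x, f x ∈ U x) ×ˢ
          (Finset.univ : Finset ((Fin n → ZMod p) × (Fin n → ZMod p) × (Fin n → ZMod p)))).filter
          fun q =>
            q.1 (q.2.1 + q.2.2.1) - q.1 q.2.2.1 = q.1 (q.2.1 + q.2.2.2) - q.1 q.2.2.2 ∧
            q.1 q.2.2.1 ∈ U q.2.2.1 ∧
            q.1 q.2.2.1 ∉
              Submodule.span (ZMod p) ((fun Lb => Lb.1 q.2.2.1 + Lb.2) '' 𝓛 q.2.2.1) ∧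
            q.1 q.2.2.2 ∈ U q.2.2.2 ∧
            q.1 q.2.2.2 ∉
              Submodule.span (ZMod p) ((fun Lb => Lb.1 q.2.2.2 + Lb.2) '' 𝓛 q.2.2.2)).card : ℝ) := by
  rw [card_filter_product_univ]
  -- not `exact`: the statement's finsets carry other `Fintype`/`Decidable` instances
  convert le_sum_card_tripleEvent
    (Sp := fun z => Submodule.span (ZMod p) ((fun Lb => Lb.1 z + Lb.2) '' 𝓛 z)) hU
    (hWitness.trans ?witnessed)
  case witnessed =>
    gcongr
    rintro ⟨a, ha, b, hb, c, hc, d', hd', h, -, hbs, hds⟩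
    exact ⟨a, ha, b, hb, c, hc, d', hd', h, hbs, hds⟩
  rfl

theorem stmt13 (p n m d : ℕ) [Fact p.Prime]
    (U : (Fin n → ZMod p) → Submodule (ZMod p) (Fin m → ZMod p))
    (hU : ∀ y, Module.finrank (ZMod p) (U y) = d)
    -- collections of affine maps x ↦ T x + b, encoded by pairs (T, b); 𝓛 y is the
    -- collection attached to y, and `spanEval y x` is the span of {L(x) : L ∈ 𝓛 y}
    (𝓛 : (Fin n → ZMod p) →
      Set (((Fin n → ZMod p) →ₗ[ZMod p] (Fin m → ZMod p)) × (Fin m → ZMod p)))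
    (hfin : ∀ y, (𝓛 y).Finite)
    (hWitness : (Fintype.card (Fin n → ZMod p) : ℝ) ^ 3 ≤ 8 *
      ((Finset.univ.filter fun t : (Fin n → ZMod p) × (Fin n → ZMod p) × (Fin n → ZMod p) =>
        ∃ a ∈ U (t.1 + t.2.1), ∃ b ∈ U t.2.1, ∃ c ∈ U (t.1 + t.2.2), ∃ d' ∈ U t.2.2,
          a - b = c - d' ∧ a - b ≠ 0 ∧
          b ∉ Submodule.span (ZMod p) ((fun Lb => Lb.1 t.2.1 + Lb.2) '' 𝓛 t.2.1) ∧
          d' ∉ Submodule.span (ZMod p) ((fun Lb => Lb.1 t.2.2 + Lb.2) '' 𝓛 t.2.2)).card : ℝ)) :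
    (1 / 8 : ℝ) * ((Fintype.card (ZMod p) : ℝ) ^ (4 * d))⁻¹ *
        ((Finset.univ.filter fun f : (Fin n → ZMod p) → (Fin m → ZMod p) =>
          ∀ x, f x ∈ U x).card : ℝ) *
        (Fintype.card (Fin n → ZMod p) : ℝ) ^ 3 ≤
      ((((Finset.univ.filter fun f : (Fin n → ZMod p) → (Fin m → ZMod p) =>
            ∀ x, f x ∈ U x) ×ˢ
          (Finset.univ : Finset ((Fin n → ZMod p) × (Fin n → ZMod p) × (Fin n → ZMod p)))).filter
          fun q =>
            q.1 (q.2.1 + q.2.2.1) - q.1 q.2.2.1 = q.1 (q.2.1 + q.2.2.2) - q.1 q.2.2.2 ∧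
            q.1 q.2.2.1 ∈ U q.2.2.1 ∧
            q.1 q.2.2.1 ∉
              Submodule.span (ZMod p) ((fun Lb => Lb.1 q.2.2.1 + Lb.2) '' 𝓛 q.2.2.1) ∧
            q.1 q.2.2.2 ∈ U q.2.2.2 ∧
            q.1 q.2.2.2 ∉
              Submodule.span (ZMod p) ((fun Lb => Lb.1 q.2.2.2 + Lb.2) '' 𝓛 q.2.2.2)).card : ℝ) :=
  stmt13_general p n m d U hU 𝓛 hWitness
end
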